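/- Let τ be a finite sequence of distinct natural numbers and k a natural number not occurring in τ, and suppose aix f(k,τ) = 0 and τ = f(l,σ) for some natural number l and sequence σ of distinct naturals with l not occurring in σ. Then des f(k,τ) = 1 + des f(k,σ). -/

import Mathlib

namespace PaperStats

/-- `des w` is the number of descents of the word `w` (0-indexed positions `i`
with `w(i) > w(i+1)`). -/
def des (w : List ℕ) : ℕ :=
  ((Finset.range (w.length - 1)).filter fun i => w.getD (i + 1) 0 < w.getD i 0).card

/-- `inv w` is the number of inversions of the word `w`: pairs of positions
`i < j` with `w(i) > w(j)`. -/
def inv (w : List ℕ) : ℕ :=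
  ((Finset.range w.length ×ˢ Finset.range w.length).filter
    fun p => p.1 < p.2 ∧ w.getD p.2 0 < w.getD p.1 0).card

/-- An inversion `(i,j)` of `w` is admissible if either `w(j) < w(j+1)`
(`j` is not the last position and is followed by an ascent), or there is a
position `k` strictly between `i` and `j` with `w(j) > w(k)`. -/
def IsAdmissible (w : List ℕ) (i j : ℕ) : Prop :=
  (j + 1 < w.length ∧ w.getD j 0 < w.getD (j + 1) 0) ∨
    ∃ k, i < k ∧ k < j ∧ w.getD k 0 < w.getD j 0

instance (w : List ℕ) (i j : ℕ) : Decidable (IsAdmissible w i j) :=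
  decidable_of_iff ((j + 1 < w.length ∧ w.getD j 0 < w.getD (j + 1) 0) ∨
      ∃ k ∈ Finset.Ioo i j, w.getD k 0 < w.getD j 0) (by
    unfold IsAdmissible
    simp only [Finset.mem_Ioo, and_assoc])

/-- `ai w` is the number of admissible inversions of `w`. -/
def ai (w : List ℕ) : ℕ :=
  ((Finset.range w.length ×ˢ Finset.range w.length).filter
    fun p => p.1 < p.2 ∧ w.getD p.2 0 < w.getD p.1 0 ∧ IsAdmissible w p.1 p.2).card

/-- `aid w = ai w + des w`. -/
def aid (w : List ℕ) : ℕ := ai w + des w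

/-- The statistic `aix`, defined recursively: `aix ∅ = 0`; writing a nonempty
word as `π = α m β`, where `m` is the smallest letter and `α` is the maximal
prefix not containing `m`, one has `aix π = 1 + aix β` if `α = ∅`,
`aix π = 0` if `β = ∅` (and `α ≠ ∅`), and `aix π = aix α` otherwise. -/
def aix : List ℕ → ℕ
  | [] => 0
  | x :: xs =>
    if (x :: xs).takeWhile (fun a => decide (a ≠ xs.foldr min x)) = [] then
      1 + aix (((x :: xs).dropWhile (fun a => decide (a ≠ xs.foldr min x))).tail)
    else if ((x :: xs).dropWhile (fun a => decide (a ≠ xs.foldr min x))).tail = [] then 0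
    else aix ((x :: xs).takeWhile (fun a => decide (a ≠ xs.foldr min x)))
termination_by w => w.length
decreasing_by
  all_goals simp only [List.foldr_attach] at *
  · have h1 := (List.dropWhile_sublist (l := x :: xs) (fun a => decide (a ≠ xs.foldr min x))).length_le
    have h2 := List.length_tail (l := (x :: xs).dropWhile (fun a => decide (a ≠ xs.foldr min x)))
    simp only [List.length_cons] at *
    omega
  · rename_i hα hβ
    have h0 : ((x :: xs).takeWhile (fun a => decide (a ≠ xs.foldr min x))) ++
        ((x :: xs).dropWhile (fun a => decide (a ≠ xs.foldr min x))) = x :: xs :=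
      List.takeWhile_append_dropWhile ..
    have h1 : ((x :: xs).dropWhile (fun a => decide (a ≠ xs.foldr min x))) ≠ [] := by
      intro h
      apply hβ
      rw [h]
      rfl
    have h2 := congrArg List.length h0
    simp only [List.length_append, List.length_cons] at h2
    have h3 : 0 < ((x :: xs).dropWhile (fun a => decide (a ≠ xs.foldr min x))).length :=
      List.length_pos_iff.mpr h1
    simp only [List.length_cons]
    omega

/-- The map `f(k,τ)`: with `m` the smallest letter of `τ` together with `k`
(`k` not occurring in `τ`), and `τ = α m β` with `α` the maximal prefix of `τ`
avoiding `m`: `f(k,∅) = k`; `f(k,τ) = kτ` if `k = m`; and for `k > m`,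
`f(k,τ) = f(k,β) m` if `α = ∅`, `f(k,τ) = k m α` if `β = ∅`, and
`f(k,τ) = f(k,α) m β` otherwise. -/
def fkt (k : ℕ) : List ℕ → List ℕ
  | [] => [k]
  | x :: xs =>
    if k < xs.foldr min x then k :: x :: xs
    else if (x :: xs).takeWhile (fun a => decide (a ≠ xs.foldr min x)) = [] then
      fkt k (((x :: xs).dropWhile (fun a => decide (a ≠ xs.foldr min x))).tail) ++
        [xs.foldr min x]
    else if ((x :: xs).dropWhile (fun a => decide (a ≠ xs.foldr min x))).tail = [] then
      k :: xs.foldr min x :: ((x :: xs).takeWhile (fun a => decide (a ≠ xs.foldr min x)))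
    else
      fkt k ((x :: xs).takeWhile (fun a => decide (a ≠ xs.foldr min x))) ++
        xs.foldr min x :: ((x :: xs).dropWhile (fun a => decide (a ≠ xs.foldr min x))).tail
termination_by w => w.length
decreasing_by
  all_goals simp only [List.foldr_attach] at *
  · have h1 := (List.dropWhile_sublist (l := x :: xs) (fun a => decide (a ≠ xs.foldr min x))).length_le
    have h2 := List.length_tail (l := (x :: xs).dropWhile (fun a => decide (a ≠ xs.foldr min x)))
    simp only [List.length_cons] at *
    omega
  · rename_i hk hα hβ
    have h0 : ((x :: xs).takeWhile (fun a => decide (a ≠ xs.foldr min x))) ++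
        ((x :: xs).dropWhile (fun a => decide (a ≠ xs.foldr min x))) = x :: xs :=
      List.takeWhile_append_dropWhile ..
    have h1 : ((x :: xs).dropWhile (fun a => decide (a ≠ xs.foldr min x))) ≠ [] := by
      intro h
      apply hβ
      rw [h]
      rfl
    have h2 := congrArg List.length h0
    simp only [List.length_append, List.length_cons] at h2
    have h3 : 0 < ((x :: xs).dropWhile (fun a => decide (a ≠ xs.foldr min x))).length :=
      List.length_pos_iff.mpr h1
    simp only [List.length_cons]
    omega

/-- `ini w` is the first letter of `w`. -/
def ini (w : List ℕ) : ℕ := w.headD 0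

/-- The word of a permutation `π ∈ S_n`, namely `π(1) π(2) … π(n)`
(with values in `{1, …, n}`). -/
def permList {n : ℕ} (π : Equiv.Perm (Fin n)) : List ℕ :=
  List.ofFn fun i => (π i : ℕ) + 1

/-- The bijection `φ`: `φ(π) = f(π(1), f(π(2), ⋯ f(π(n), ∅) ⋯ ))`. -/
def phiW (w : List ℕ) : List ℕ := w.foldr fkt []

/-- Helper: `decRun l` splits `l` into its maximal weakly decreasing prefix
and the rest. -/
def decRun : List ℕ → List ℕ × List ℕ
  | [] => ([], [])
  | [x] => ([x], [])
  | x :: y :: rest =>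
    if y ≤ x then ((x :: (decRun (y :: rest)).1), (decRun (y :: rest)).2)
    else ([x], y :: rest)

theorem decRun_append : ∀ l : List ℕ, (decRun l).1 ++ (decRun l).2 = l
  | [] => rfl
  | [x] => rfl
  | x :: y :: rest => by
    rw [decRun]
    split
    · simpa using decRun_append (y :: rest)
    · rfl

/-- Helper computing the hook factorization of a word from its reversal: the
rightmost hook of the word starts at its rightmost descent top, i.e. it is
obtained by extending the maximal weakly decreasing prefix of the reversed word
by one more letter; the process is repeated on what remains, and when no
letters usable for a hook remain the word left over is the increasing part
`π₀`. The result is `(π₀, [π₁, …, π_k])`. -/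
def hookRev (r : List ℕ) : List ℕ × List (List ℕ) :=
  match h : (decRun r).2 with
  | [] => (r.reverse, [])
  | z :: rest =>
    ((hookRev rest).1, (hookRev rest).2 ++ [z :: (decRun r).1.reverse])
termination_by r.length
decreasing_by
  have h2 := congrArg List.length (decRun_append r)
  rw [h] at h2
  simp only [List.length_append, List.length_cons] at h2
  omega

/-- The hook factorization `(π₀, [π₁, …, π_k])` of a word
`w = π₀ π₁ ⋯ π_k`, where `π₀` is increasing and each `π_i`, `i ≥ 1`, is a
hook. -/
def hookSplit (w : List ℕ) : List ℕ × List (List ℕ) := hookRev w.reverse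

/-- `pix w` is the length of the initial increasing factor `π₀` in the hook
factorization of `w`. -/
def pix (w : List ℕ) : ℕ := (hookSplit w).1.length

/-- `lec w` is the sum of the numbers of inversions of the hooks in the hook
factorization of `w`. -/
def lec (w : List ℕ) : ℕ := ((hookSplit w).2.map inv).sum

/-- A word `w(1) … w(r)` with `r ≥ 2` is a hook if
`w(1) > w(2) ≤ w(3) ≤ ⋯ ≤ w(r)`. -/
def IsHook (w : List ℕ) : Prop :=
  ∃ a b rest, w = a :: b :: rest ∧ b < a ∧ List.Chain' (· ≤ ·) (b :: rest)

/-- `w(i)` is a left-to-right maximum of `w` if `w(k) < w(i)` for all `k < i`. -/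
def IsLRMax (w : List ℕ) (i : ℕ) : Prop := ∀ k < i, w.getD k 0 < w.getD i 0

instance (w : List ℕ) (i : ℕ) : Decidable (IsLRMax w i) := by
  unfold IsLRMax; infer_instance

/-- `mix w` counts the pairs of positions `i < j` such that either
`w(i) > w(j)` and `w(i)` is a left-to-right maximum, or `w(i) < w(j)` and
there is `k < i` with `w(k) > w(j)`. -/
def mix (w : List ℕ) : ℕ :=
  ((Finset.range w.length ×ˢ Finset.range w.length).filter fun p =>
    p.1 < p.2 ∧ ((w.getD p.2 0 < w.getD p.1 0 ∧ IsLRMax w p.1) ∨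
      (w.getD p.1 0 < w.getD p.2 0 ∧ ∃ k ∈ Finset.range p.1, w.getD p.2 0 < w.getD k 0))).card

/-- `das w` counts the positions `i` such that either `w(i) > w(i+1)` and
`w(i)` is a left-to-right maximum, or `w(i) < w(i+1)` and there is `k < i`
with `w(k) > w(i+1)`. -/
def das (w : List ℕ) : ℕ :=
  ((Finset.range (w.length - 1)).filter fun i =>
    (w.getD (i + 1) 0 < w.getD i 0 ∧ IsLRMax w i) ∨
      (w.getD i 0 < w.getD (i + 1) 0 ∧ ∃ k ∈ Finset.range i, w.getD (i + 1) 0 < w.getD k 0)).card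

/-- The values of the left-to-right maxima of a word, listed in increasing
order (which is also their order of occurrence). -/
def lrMaxima : List ℕ → List ℕ
  | [] => []
  | x :: xs => x :: lrMaxima (xs.filter fun a => decide (x < a))
termination_by l => l.length
decreasing_by
  simp only [List.length_unattach]
  have := xs.length_filter_le (fun a => decide (x < a))
  simp only [List.length_cons]
  exact Nat.lt_succ_of_le ((List.length_filter_le _ _).trans_eq List.length_attach)

/-- `Bset w m` is the list of entries of `w` that are smaller than `m` and lie
to the right of (the first occurrence of) `m` in `w`. -/
def Bset (w : List ℕ) (m : ℕ) : List ℕ :=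
  ((w.dropWhile fun a => decide (a ≠ m)).tail).filter fun a => decide (a < m)

/-- Helper for `psiS`: replace the letters satisfying `P`, in order, by the
letters of the first list. -/
def replaceSub (P : ℕ → Bool) : List ℕ → List ℕ → List ℕ
  | _, [] => []
  | rs, x :: xs =>
    if P x then rs.headD x :: replaceSub P rs.tail xs else x :: replaceSub P rs xs

/-- `psiS S w` is `ψ_S(w)`: the result of reversing, in place, the subword of
`w` consisting of the entries belonging to `S`. -/
def psiS (S : List ℕ) (w : List ℕ) : List ℕ :=
  replaceSub (fun a => decide (a ∈ S)) ((w.filter fun a => decide (a ∈ S)).reverse) w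

/-- Helper applying the alternating composition
`ψ_{B₁} ∘ ψ_{B₂ ∩ B₁} ∘ ψ_{B₂} ∘ ⋯ ∘ ψ_{B_{k-1}} ∘ ψ_{B_k ∩ B_{k-1}} ∘ ψ_{B_k}`
to `w`, given the list `[B_k, B_{k-1}, …, B₁]`. -/
def psiChain : List (List ℕ) → List ℕ → List ℕ
  | [], w => w
  | [B], w => psiS B w
  | B :: B' :: rest, w => psiChain (B' :: rest) (psiS (B.inter B') (psiS B w))

/-- The Brändén–Claesson bijection `ψ`. -/
def psi (w : List ℕ) : List ℕ :=
  psiChain (((lrMaxima w).map (Bset w)).reverse) w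

/-!
Write `σ = A m B` with `m` its smallest letter. If `l < m`, then `τ = l σ` and `f(k,τ) = f(k,σ) l`,
which has exactly one descent more than `f(k,σ)`. If `m < l`, the condition `aix f(k,τ) = 0`
forces `m < k` and rules out `A = ∅`, because then `f(k,τ) = k m f(l,B)` has `aix = 1`.
For `A ≠ ∅` both `f(k,τ)` and `f(k,σ)` keep the suffix `m B` (when `B = ∅`, the suffix `m A`),
and the prefixes in front of it are compared by induction on `A`, or directly when `B = ∅`.
-/

theorem foldr_min_mem (x : ℕ) (xs : List ℕ) : xs.foldr min x ∈ x :: xs := by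
  induction xs with
  | nil => simp
  | cons y ys ih =>
    rcases min_choice y (ys.foldr min x) with h | h <;> rw [List.foldr_cons, h] <;> grind

theorem foldr_min_le (x : ℕ) (xs : List ℕ) : ∀ a ∈ x :: xs, xs.foldr min x ≤ a := by
  induction xs with
  | nil => simp
  | cons y ys ih => grind

theorem exists_eq_append_cons_of_nodup {σ : List ℕ} (hσ : σ.Nodup) (hne : σ ≠ []) :
    ∃ A M B, σ = A ++ M :: B ∧ (∀ a ∈ A, M < a) ∧ ∀ a ∈ B, M < a := by
  obtain ⟨A, B, hAB⟩ := List.append_of_mem (List.min_mem hne)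
  have hle : ∀ a ∈ σ, σ.min hne ≤ a := fun a ha => List.min_le_of_mem ha
  generalize σ.min hne = M at hAB hle
  subst hAB
  have hM : M ∉ A ++ B := (List.nodup_cons.mp (List.nodup_middle.mp hσ)).1
  refine ⟨A, M, B, rfl, ?_, ?_⟩ <;> intro a ha <;>
    exact lt_of_le_of_ne (hle a (by simp [ha])) (by rintro rfl; simp [ha] at hM)

theorem fkt_of_forall_lt {k : ℕ} {τ : List ℕ} (h : ∀ a ∈ τ, k < a) : fkt k τ = k :: τ := by
  cases τ with
  | nil => rw [fkt]
  | cons x xs => rw [fkt, if_pos (h _ (foldr_min_mem x xs))]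

section Unfolding

variable {A B : List ℕ} {M : ℕ}

theorem foldr_min_eq_of_eq_append_cons {x : ℕ} {xs : List ℕ} (h : A ++ M :: B = x :: xs)
    (hA : ∀ a ∈ A, M < a) (hB : ∀ a ∈ B, M < a) : xs.foldr min x = M := by
  have hmem := foldr_min_mem x xs
  refine le_antisymm (foldr_min_le x xs M (by simp [← h])) ?_
  rw [← h] at hmem
  grind

theorem fkt_append_cons (k : ℕ) (hA : ∀ a ∈ A, M < a) (hB : ∀ a ∈ B, M < a) :
    fkt k (A ++ M :: B) =
      if k < M then k :: (A ++ M :: B)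
      else if A = [] then fkt k B ++ [M]
      else if B = [] then k :: M :: A
      else fkt k A ++ M :: B := by
  obtain ⟨x, xs, h⟩ := List.exists_cons_of_ne_nil (List.append_ne_nil_of_right_ne_nil A
    (List.cons_ne_nil M B))
  have hMA : ∀ a ∈ A, decide (a ≠ M) = true := fun a ha => by simpa using (hA a ha).ne'
  rw [h, fkt, foldr_min_eq_of_eq_append_cons h hA hB, ← h, List.takeWhile_append_of_pos hMA,
    List.dropWhile_append_of_pos hMA]
  simp

theorem aix_append_cons (hA : ∀ a ∈ A, M < a) (hB : ∀ a ∈ B, M < a) :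
    aix (A ++ M :: B) =
      if A = [] then 1 + aix B
      else if B = [] then 0
      else aix A := by
  obtain ⟨x, xs, h⟩ := List.exists_cons_of_ne_nil (List.append_ne_nil_of_right_ne_nil A
    (List.cons_ne_nil M B))
  have hMA : ∀ a ∈ A, decide (a ≠ M) = true := fun a ha => by simpa using (hA a ha).ne'
  rw [h, aix, foldr_min_eq_of_eq_append_cons h hA hB, ← h, List.takeWhile_append_of_pos hMA,
    List.dropWhile_append_of_pos hMA]
  simp

theorem fkt_cons_of_forall_lt {k : ℕ} (hB : ∀ a ∈ B, M < a) (hMk : M < k) :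
    fkt k (M :: B) = fkt k B ++ [M] := by
  simpa [hMk.not_gt] using fkt_append_cons k (A := []) (by simp) hB

theorem fkt_append_singleton_of_forall_lt {k : ℕ} (hA : A ≠ []) (hA' : ∀ a ∈ A, M < a)
    (hMk : M < k) : fkt k (A ++ [M]) = k :: M :: A := by
  simpa [hMk.not_gt, hA] using fkt_append_cons k hA' (B := []) (by simp)

theorem fkt_append_cons_of_forall_lt {k : ℕ} (hA : A ≠ []) (hB : B ≠ [])
    (hA' : ∀ a ∈ A, M < a) (hB' : ∀ a ∈ B, M < a) (hMk : M < k) :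
    fkt k (A ++ M :: B) = fkt k A ++ M :: B := by
  simpa [hMk.not_gt, hA, hB] using fkt_append_cons k hA' hB'

theorem aix_cons_of_forall_lt (hB : ∀ a ∈ B, M < a) : aix (M :: B) = 1 + aix B := by
  simpa using aix_append_cons (A := []) (by simp) hB

theorem aix_append_cons_of_forall_lt (hA : A ≠ []) (hB : B ≠ []) (hA' : ∀ a ∈ A, M < a)
    (hB' : ∀ a ∈ B, M < a) : aix (A ++ M :: B) = aix A := by
  simpa [hA, hB] using aix_append_cons hA' hB'

end Unfolding

theorem aix_singleton (a : ℕ) : aix [a] = 1 := by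
  rw [aix_cons_of_forall_lt (by simp), aix]

theorem fkt_ne_nil (k : ℕ) (σ : List ℕ) : fkt k σ ≠ [] := by
  cases σ with
  | nil => simp [fkt]
  | cons => rw [fkt]; split_ifs <;> simp

theorem fkt_subset (k : ℕ) (σ : List ℕ) : fkt k σ ⊆ k :: σ := by
  fun_induction fkt k σ with
  | case1 => simp
  | _ x xs =>
    simp only [List.foldr_attach] at *
    have hM := foldr_min_mem x xs
    have hT := (List.takeWhile_sublist (fun a => decide (a ≠ xs.foldr min x))
      (l := x :: xs)).subset
    have hD := ((List.tail_sublist _).trans (List.dropWhile_sublist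
      (fun a => decide (a ≠ xs.foldr min x)) (l := x :: xs))).subset
    grind

theorem forall_lt_fkt {m k : ℕ} {σ : List ℕ} (hmk : m < k) (hσ : ∀ a ∈ σ, m < a) :
    ∀ a ∈ fkt k σ, m < a := fun a ha => by
  rcases List.mem_cons.mp (fkt_subset k σ ha) with rfl | ha
  exacts [hmk, hσ a ha]

theorem lt_of_aix_fkt_append_cons_eq_zero {k M : ℕ} {A B : List ℕ} (hk : k ∉ A ++ M :: B)
    (hA : ∀ a ∈ A, M < a) (hB : ∀ a ∈ B, M < a) (h0 : aix (fkt k (A ++ M :: B)) = 0) :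
    M < k := by
  by_contra! hkM
  have hlt : ∀ a ∈ A ++ M :: B, k < a := fun a ha =>
    lt_of_le_of_ne (hkM.trans (by grind)) (by rintro rfl; exact hk ha)
  rw [fkt_of_forall_lt hlt, aix_cons_of_forall_lt hlt] at h0
  omega

theorem des_nil : des [] = 0 := rfl

theorem des_singleton (a : ℕ) : des [a] = 0 := rfl

theorem des_cons_cons (x y : ℕ) (t : List ℕ) :
    des (x :: y :: t) = (if y < x then 1 else 0) + des (y :: t) := by
  simp only [des, List.length_cons, Nat.add_sub_cancel]
  rw [Finset.card_filter, Finset.card_filter, Finset.sum_range_succ']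
  simp only [List.getD_cons_succ, List.getD_cons_zero]
  omega

theorem des_cons_of_forall_lt {m : ℕ} {v : List ℕ} (hv : ∀ a ∈ v, m < a) :
    des (m :: v) = des v := by
  cases v with
  | nil => rfl
  | cons y t => rw [des_cons_cons, if_neg (hv y (by simp)).not_gt, Nat.zero_add]

theorem des_append_cons_of_forall_lt {m : ℕ} {u v : List ℕ} (hu : u ≠ [])
    (hu' : ∀ a ∈ u, m < a) (hv : ∀ a ∈ v, m < a) : des (u ++ m :: v) = des u + 1 + des v := by
  induction u with
  | nil => exact absurd rfl hu
  | cons x u ih =>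
    cases u with
    | nil => rw [List.singleton_append, des_cons_cons, if_pos (hu' x (by simp)),
        des_cons_of_forall_lt hv, des_singleton]
    | cons y t =>
      rw [List.cons_append, List.cons_append, des_cons_cons, ← List.cons_append,
        ih (List.cons_ne_nil y t) (fun a ha => hu' a (List.mem_cons_of_mem x ha)), des_cons_cons]
      omega

theorem aix_fkt_append_cons_of_forall_lt {k M : ℕ} {v B : List ℕ} (hv : v ≠ []) (hB : B ≠ [])
    (hv' : ∀ a ∈ v, M < a) (hB' : ∀ a ∈ B, M < a) (hMk : M < k) :
    aix (fkt k (v ++ M :: B)) = aix (fkt k v) := by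
  rw [fkt_append_cons_of_forall_lt hv hB hv' hB' hMk,
    aix_append_cons_of_forall_lt (fkt_ne_nil k v) hB (forall_lt_fkt hMk hv') hB']

theorem des_fkt_append_cons_of_forall_lt {k M : ℕ} {v B : List ℕ} (hv : v ≠ []) (hB : B ≠ [])
    (hv' : ∀ a ∈ v, M < a) (hB' : ∀ a ∈ B, M < a) (hMk : M < k) :
    des (fkt k (v ++ M :: B)) = des (fkt k v) + 1 + des B := by
  rw [fkt_append_cons_of_forall_lt hv hB hv' hB' hMk,
    des_append_cons_of_forall_lt (fkt_ne_nil k v) (forall_lt_fkt hMk hv') hB']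

theorem des_fkt_fkt_of_forall_lt {k l : ℕ} {σ : List ℕ} (hl : ∀ a ∈ σ, l < a)
    (hk : k ∉ fkt l σ) (h0 : aix (fkt k (fkt l σ)) = 0) :
    des (fkt k (fkt l σ)) = 1 + des (fkt k σ) := by
  rw [fkt_of_forall_lt hl, ← List.nil_append (l :: σ)] at hk h0 ⊢
  have hlk := lt_of_aix_fkt_append_cons_eq_zero hk (by simp) hl h0
  rw [List.nil_append, fkt_cons_of_forall_lt hl hlk,
    des_append_cons_of_forall_lt (fkt_ne_nil k σ) (forall_lt_fkt hlk hl) (v := []) (by simp),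
    des_nil]
  omega

theorem aix_fkt_fkt_cons_ne_zero {k l M : ℕ} {B : List ℕ} (hB : ∀ a ∈ B, M < a) (hMl : M < l)
    (hk : k ∉ fkt l (M :: B)) : aix (fkt k (fkt l (M :: B))) ≠ 0 := by
  intro h0
  have hu := forall_lt_fkt hMl hB
  rw [fkt_cons_of_forall_lt hB hMl] at hk h0
  have hMk := lt_of_aix_fkt_append_cons_eq_zero hk hu (by simp) h0
  rw [fkt_append_singleton_of_forall_lt (fkt_ne_nil l B) hu hMk, ← List.singleton_append,
    aix_append_cons_of_forall_lt (List.cons_ne_nil k []) (fkt_ne_nil l B) (by simpa using hMk) hu,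
    aix_singleton] at h0
  exact one_ne_zero h0

theorem des_fkt_fkt_append_singleton {k l M : ℕ} {A : List ℕ} (hA : A ≠ [])
    (hA' : ∀ a ∈ A, M < a) (hMl : M < l) (hk : k ∉ fkt l (A ++ [M]))
    (h0 : aix (fkt k (fkt l (A ++ [M]))) = 0) :
    des (fkt k (fkt l (A ++ [M]))) = 1 + des (fkt k (A ++ [M])) := by
  rw [fkt_append_singleton_of_forall_lt hA hA' hMl, ← List.singleton_append] at hk h0 ⊢
  have hl : ∀ a ∈ [l], M < a := by simpa using hMl
  have hMk := lt_of_aix_fkt_append_cons_eq_zero hk hl hA' h0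
  rw [aix_fkt_append_cons_of_forall_lt (List.cons_ne_nil l []) hA hl hA' hMk,
    ← List.nil_append [l]] at h0
  have hlk := lt_of_aix_fkt_append_cons_eq_zero (by simp_all) (by simp) (by simp) h0
  rw [des_fkt_append_cons_of_forall_lt (List.cons_ne_nil l []) hA hl hA' hMk,
    fkt_append_singleton_of_forall_lt hA hA' hMk, fkt_cons_of_forall_lt (B := []) (by simp) hlk,
    fkt_of_forall_lt (τ := []) (by simp)]
  simp only [List.nil_append, List.cons_append, des_cons_cons, des_singleton,
    des_cons_of_forall_lt hA', if_pos hlk, if_pos hMk]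
  omega

theorem des_fkt_fkt_of_aix_eq_zero {k l : ℕ} {σ : List ℕ} (hσ : σ.Nodup) (hl : l ∉ σ)
    (hk : k ∉ fkt l σ) (h0 : aix (fkt k (fkt l σ)) = 0) :
    des (fkt k (fkt l σ)) = 1 + des (fkt k σ) := by
  by_cases hlσ : ∀ a ∈ σ, l < a
  · exact des_fkt_fkt_of_forall_lt hlσ hk h0
  obtain ⟨A, M, B, rfl, hA, hB⟩ :=
    exists_eq_append_cons_of_nodup hσ (by rintro rfl; simp at hlσ)
  have hMl : M < l := by grind
  rcases eq_or_ne A [] with rfl | hAne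
  · exact absurd h0 (aix_fkt_fkt_cons_ne_zero hB hMl hk)
  rcases eq_or_ne B [] with rfl | hBne
  · exact des_fkt_fkt_append_singleton hAne hA hMl hk h0
  have hu := forall_lt_fkt hMl hA
  rw [fkt_append_cons_of_forall_lt hAne hBne hA hB hMl] at hk h0 ⊢
  have hMk := lt_of_aix_fkt_append_cons_eq_zero hk hu hB h0
  rw [aix_fkt_append_cons_of_forall_lt (fkt_ne_nil l A) hBne hu hB hMk] at h0
  have ih := des_fkt_fkt_of_aix_eq_zero hσ.of_append_left (fun h => hl (List.mem_append_left _ h))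
    (fun h => hk (List.mem_append_left _ h)) h0
  rw [des_fkt_append_cons_of_forall_lt (fkt_ne_nil l A) hBne hu hB hMk,
    des_fkt_append_cons_of_forall_lt hAne hBne hA hB hMk, ih]
  omega
termination_by σ.length

theorem des_fkt_of_aix_fkt_eq_zero_general (k l : ℕ) (τ σ : List ℕ)
    (hk : k ∉ τ) (hσ : σ.Nodup) (hl : l ∉ σ) (hτσ : τ = fkt l σ)
    (h0 : aix (fkt k τ) = 0) :
    des (fkt k τ) = 1 + des (fkt k σ) := by
  subst hτσ
  exact des_fkt_fkt_of_aix_eq_zero hσ hl hk h0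

/-- If `aix f(k,τ) = 0` and `τ = f(l,σ)`, then
`des f(k,τ) = 1 + des f(k,σ)`. -/
theorem des_fkt_of_aix_fkt_eq_zero (k l : ℕ) (τ σ : List ℕ) (hτ : τ.Nodup)
    (hk : k ∉ τ) (hσ : σ.Nodup) (hl : l ∉ σ) (hτσ : τ = fkt l σ)
    (h0 : aix (fkt k τ) = 0) :
    des (fkt k τ) = 1 + des (fkt k σ) :=
  des_fkt_of_aix_fkt_eq_zero_general k l τ σ hk hσ hl hτσ h0

end PaperStats
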